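/- Let 1 < p, q < ∞, X = ℓ^p(ℓ^q), s = max{p', q'}, and c₁ = min{1/p, 1/q}. Then for every nonzero x ∈ X and every pair (j,k), dist(x, span{e_{j,k}}) ≤ ‖x‖·(1 − c₁ |F_x(e_{j,k})|^s), where e_{j,k} is the canonical basis vector and F_x is the norming functional of x. -/

import Mathlib

/-- The mixed norm of `ℓ^p(ℓ^q)`. -/
noncomputable def lpqNorm (p q : ℝ) {𝕜 : Type*} [RCLike 𝕜] (x : ℕ → ℕ → 𝕜) : ℝ :=
  (∑' j, (∑' k, ‖x j k‖ ^ q) ^ (p / q)) ^ (1 / p)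

/-- `Δ_j(x) = (Σ_k |x_{j,k}|^q)^{1/q}`. -/
noncomputable def lpqDelta (q : ℝ) {𝕜 : Type*} [RCLike 𝕜] (x : ℕ → ℕ → 𝕜) (j : ℕ) : ℝ :=
  (∑' k, ‖x j k‖ ^ q) ^ (1 / q)

/-!
Take `λ = x_{j,k}`, i.e. delete the entry. With `a = Δ_j(x)^q`, `A = ‖x‖^p`, `u = a^{p/q}/A` and
`v = |x_{j,k}|^q/a`, the `p`-th power of the norm of the remaining vector is
`A - a^{p/q} + a^{p/q} (1 - v)^{p/q} ≤ A (1 - min(1, p/q) u v)` by Bernoulli's inequality, and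
Bernoulli again for the `p`-th root gives `‖x‖ (1 - c₁ u v)`. Finally
`|F_x(e_{j,k})| = u^{1/p'} v^{1/q'}`, so since `u, v ≤ 1` and `s ≥ p', q'`, its `s`-th power is at
most `u v`.
-/

open Real

lemma one_sub_rpow_le_one_sub_min_mul {r v : ℝ} (hr : 0 < r) (hv0 : 0 ≤ v) (hv1 : v ≤ 1) :
    (1 - v) ^ r ≤ 1 - min 1 r * v := by
  rcases le_total r 1 with hr1 | hr1
  · rw [min_eq_right hr1]
    simpa [sub_eq_add_neg] using
      rpow_one_add_le_one_add_mul_self (s := -v) (by linarith) hr.le hr1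
  · rw [min_eq_left hr1, one_mul]
    exact rpow_le_self_of_le_one (sub_nonneg.2 hv1) (by linarith) hr1

lemma sub_rpow_le_rpow_mul_one_sub {r a b : ℝ} (hr : 0 < r) (hb : 0 ≤ b) (hba : b ≤ a) :
    (a - b) ^ r ≤ a ^ r * (1 - min 1 r * (b / a)) := by
  rcases (hb.trans hba).eq_or_lt with rfl | ha
  · obtain rfl : b = 0 := le_antisymm hba hb
    simp
  · have hab : a - b = a * (1 - b / a) := by field_simp
    rw [hab, mul_rpow ha.le (sub_nonneg.2 ((div_le_one ha).2 hba))]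
    gcongr
    exact one_sub_rpow_le_one_sub_min_mul hr (div_nonneg hb ha.le) ((div_le_one ha).2 hba)

lemma sub_rpow_sub_rpow_add_rpow_le {p q A a b : ℝ} (hp : 1 ≤ p) (hq : 0 < q) (hb : 0 ≤ b)
    (hba : b ≤ a) (haA : a ^ (p / q) ≤ A) :
    ((a - b) ^ (p / q) - a ^ (p / q) + A) ^ (1 / p) ≤
      A ^ (1 / p) * (1 - min (1 / p) (1 / q) * (a ^ (p / q) / A * (b / a))) := by
  have hp0 : 0 < p := by linarith
  have ha : 0 ≤ a := hb.trans hba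
  have har : 0 ≤ a ^ (p / q) := rpow_nonneg ha _
  have hA : 0 ≤ A := har.trans haA
  have hm : 0 ≤ min 1 (p / q) := le_min zero_le_one (by positivity)
  set t := min 1 (p / q) * (a ^ (p / q) / A * (b / a)) with ht
  have ht0 : 0 ≤ t := by positivity
  have ht1 : t ≤ 1 := mul_le_one₀ (min_le_left _ _) (by positivity)
    (mul_le_one₀ (div_le_one_of_le₀ haA hA) (by positivity) (div_le_one_of_le₀ hba ha))
  have hsum : (a - b) ^ (p / q) - a ^ (p / q) + A ≤ A * (1 - t) := by
    have hcancel : a ^ (p / q) / A * A = a ^ (p / q) :=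
      div_mul_cancel_of_imp fun h => le_antisymm (h ▸ haA) har
    calc _ ≤ a ^ (p / q) * (1 - min 1 (p / q) * (b / a)) - a ^ (p / q) + A := by
          gcongr; exact sub_rpow_le_rpow_mul_one_sub (by positivity) hb hba
      _ = A * (1 - t) := by rw [ht]; linear_combination min 1 (p / q) * (b / a) * hcancel
  have hmin : 1 / p * min 1 (p / q) = min (1 / p) (1 / q) := by
    rw [mul_min_of_nonneg _ _ (by positivity), mul_one, one_div_mul_eq_div,
      div_div_cancel_left' hp0.ne', one_div q]
  calc _ ≤ (A * (1 - t)) ^ (1 / p) := by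
        gcongr
        linarith [rpow_nonneg (sub_nonneg.2 hba) (p / q)]
    _ = A ^ (1 / p) * (1 - t) ^ (1 / p) := mul_rpow hA (by linarith)
    _ ≤ A ^ (1 / p) * (1 - 1 / p * t) := by
        gcongr
        have h := one_sub_rpow_le_one_sub_min_mul (r := 1 / p) (by positivity) ht0 ht1
        rwa [min_eq_right (div_le_one_of_le₀ hp hp0.le)] at h
    _ = _ := by rw [ht, ← mul_assoc, hmin]

lemma lpq_norming_value_eq {p q a c A : ℝ} (hp : p ≠ 0) (hq : q ≠ 0) (ha : 0 < a) (hc : 0 < c)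
    (hA : 0 < A) :
    (a ^ (1 / q)) ^ (p - q) * c ^ (q - 1) / (A ^ (1 / p)) ^ (p - 1) =
      (a ^ (p / q) / A) ^ (1 - 1 / p) * (c ^ q / a) ^ (1 - 1 / q) := by
  have ea : 1 / q * (p - q) = p / q * (1 - 1 / p) - (1 - 1 / q) := by field_simp; ring
  have eA : 1 / p * (p - 1) = 1 - 1 / p := by field_simp
  have ec : q * (1 - 1 / q) = q - 1 := by field_simp
  rw [div_rpow (rpow_nonneg ha.le _) hA.le, div_rpow (rpow_nonneg hc.le _) ha.le,
    ← rpow_mul ha.le, ← rpow_mul ha.le, ← rpow_mul hA.le, ← rpow_mul hc.le, ea, eA, ec,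
    rpow_sub ha]
  ring

lemma lpq_norming_value_rpow_le {p q p' q' a c A : ℝ} (hp : p.HolderConjugate p')
    (hq : q.HolderConjugate q') (hc : 0 ≤ c) (hca : c ^ q ≤ a) (haA : a ^ (p / q) ≤ A) :
    ((a ^ (1 / q)) ^ (p - q) * c ^ (q - 1) / (A ^ (1 / p)) ^ (p - 1)) ^ max p' q' ≤
      a ^ (p / q) / A * (c ^ q / a) := by
  have hs : 0 < max p' q' := lt_max_of_lt_left hp.symm.pos
  rcases hc.eq_or_lt with rfl | hc
  · have ha : 0 ≤ a := (rpow_nonneg le_rfl q).trans hca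
    rw [zero_rpow hq.sub_one_ne_zero, mul_zero, zero_div, zero_rpow hs.ne']
    exact mul_nonneg (div_nonneg (rpow_nonneg ha _) ((rpow_nonneg ha _).trans haA))
      (div_nonneg (rpow_nonneg le_rfl q) ha)
  have ha : 0 < a := (rpow_pos_of_pos hc q).trans_le hca
  have hA : 0 < A := (rpow_pos_of_pos ha _).trans_le haA
  rw [lpq_norming_value_eq hp.ne_zero hq.ne_zero ha hc hA, one_div, one_div, hp.one_sub_inv,
    hq.one_sub_inv, mul_rpow (by positivity) (by positivity), ← rpow_mul (by positivity),
    ← rpow_mul (by positivity)]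
  gcongr
  · exact rpow_le_self_of_le_one (by positivity) (div_le_one_of_le₀ haA hA.le)
      ((one_le_inv_mul₀ hp.symm.pos).2 (le_max_left _ _))
  · exact rpow_le_self_of_le_one (by positivity) (div_le_one_of_le₀ hca ha.le)
      ((one_le_inv_mul₀ hq.symm.pos).2 (le_max_right _ _))

lemma lpqNorm_nonneg (p q : ℝ) {𝕜 : Type*} [RCLike 𝕜] (x : ℕ → ℕ → 𝕜) : 0 ≤ lpqNorm p q x := by
  unfold lpqNorm; positivity

lemma lpqNorm_sub_single_entry {𝕜 : Type*} [RCLike 𝕜] {p q : ℝ} (hq : q ≠ 0)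
    {x : ℕ → ℕ → 𝕜} (hx1 : ∀ j, Summable fun k => ‖x j k‖ ^ q)
    (hx2 : Summable fun j => (∑' k, ‖x j k‖ ^ q) ^ (p / q)) (j k : ℕ) :
    lpqNorm p q (fun j' k' => x j' k' - if j' = j ∧ k' = k then x j k else 0) =
      (((∑' k', ‖x j k'‖ ^ q) - ‖x j k‖ ^ q) ^ (p / q) - (∑' k', ‖x j k'‖ ^ q) ^ (p / q) +
        ∑' j', (∑' k', ‖x j' k'‖ ^ q) ^ (p / q)) ^ (1 / p) := by
  have hrow : HasSum (fun k' => ‖x j k' - if j = j ∧ k' = k then x j k else 0‖ ^ q)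
      ((∑' k', ‖x j k'‖ ^ q) - ‖x j k‖ ^ q) := by
    have h := (hx1 j).hasSum.update k 0
    rw [zero_sub, neg_add_eq_sub] at h
    refine h.congr_fun fun k' => ?_
    rcases eq_or_ne k' k with rfl | hk
    · simp [zero_rpow hq]
    · simp [hk]
  have hrows : HasSum
      (fun j' => (∑' k', ‖x j' k' - if j' = j ∧ k' = k then x j k else 0‖ ^ q) ^ (p / q))
      (((∑' k', ‖x j k'‖ ^ q) - ‖x j k‖ ^ q) ^ (p / q) - (∑' k', ‖x j k'‖ ^ q) ^ (p / q) +
        ∑' j', (∑' k', ‖x j' k'‖ ^ q) ^ (p / q)) := by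
    have h := hx2.hasSum.update j (((∑' k', ‖x j k'‖ ^ q) - ‖x j k‖ ^ q) ^ (p / q))
    refine h.congr_fun fun j' => ?_
    rcases eq_or_ne j' j with rfl | hj
    · rw [Function.update_self, hrow.tsum_eq]
    · simp [hj]
  rw [lpqNorm, hrows.tsum_eq]

theorem stmt_7 {𝕜 : Type*} [RCLike 𝕜] (p q p' q' : ℝ) (hp : 1 < p) (hq : 1 < q)
    (hp' : 1 / p + 1 / p' = 1) (hq' : 1 / q + 1 / q' = 1)
    (x : ℕ → ℕ → 𝕜)
    (hx1 : ∀ j, Summable fun k => ‖x j k‖ ^ q)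
    (hx2 : Summable fun j => (∑' k, ‖x j k‖ ^ q) ^ (p / q))
    (j k : ℕ) :
    (⨅ lam : 𝕜, lpqNorm p q fun j' k' => x j' k' - if j' = j ∧ k' = k then lam else 0) ≤
      lpqNorm p q x * (1 - min (1 / p) (1 / q) *
        (lpqDelta q x j ^ (p - q) * ‖x j k‖ ^ (q - 1) / lpqNorm p q x ^ (p - 1))
          ^ max p' q') := by
  have hpp' : p.HolderConjugate p' := Real.holderConjugate_iff.2 ⟨hp, by simpa using hp'⟩
  have hqq' : q.HolderConjugate q' := Real.holderConjugate_iff.2 ⟨hq, by simpa using hq'⟩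
  have hca : ‖x j k‖ ^ q ≤ ∑' k', ‖x j k'‖ ^ q :=
    (hx1 j).le_tsum k fun _ _ => rpow_nonneg (norm_nonneg _) q
  have haA : (∑' k', ‖x j k'‖ ^ q) ^ (p / q) ≤ ∑' j', (∑' k', ‖x j' k'‖ ^ q) ^ (p / q) :=
    hx2.le_tsum j fun _ _ => by positivity
  refine (ciInf_le ⟨0, ?_⟩ (x j k)).trans ?_
  · rintro _ ⟨lam, rfl⟩
    exact lpqNorm_nonneg p q _
  rw [lpqNorm_sub_single_entry hqq'.ne_zero hx1 hx2]
  unfold lpqNorm lpqDelta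
  refine (sub_rpow_sub_rpow_add_rpow_le hp.le hqq'.pos (by positivity) hca haA).trans ?_
  gcongr _ * (1 - _ * ?_)
  exact lpq_norming_value_rpow_le hpp' hqq' (norm_nonneg _) hca haA
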